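/- Let σ > 0, v > 0 and ε ≥ 0. If the vℤ-aliased Gaussian density satisfies the flatness condition f_{vℤ,σ²}(x) ≤ (1+ε)/v for all x ∈ [−v/2, v/2], then the mod-vℤ channel capacity satisfies C(vℤ,σ²) = log₂ v − h(vℤ,σ²) ≤ log₂(1+ε) ≤ ε · log₂ e. In particular ε₁ = C(Λ₁,σ²) is at most ε_{Λ₁}(σ) · log₂ e for Λ₁ = vℤ, where ε_{Λ₁}(σ) = sup_x |v · f_{vℤ,σ²}(x) − 1| is the flatness factor. -/

import Mathlib

/-!
The aliased Gaussian `f` is the periodization `∑ⱼ φ(x + v j)` of the Gaussian density `φ`. On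
`[-v/2, v/2]` its terms are dominated by `φ(v j / 2)`, which is summable, so `f` is continuous
and positive there, and integrating term by term turns the integral of `f` over one period into
the integral of `φ` over `ℝ`, i.e. `1`. A probability density bounded by `M` satisfies
`∫ f log f ≤ log M`, which with `M = (1 + ε) / v` is the capacity bound; the last inequality is
`log (1 + ε) ≤ ε`.
-/

open Real

/-- The `vℤ`-aliased (wrapped) Gaussian density with noise variance `σ2`. -/
noncomputable def aliasedGaussian (v σ2 : ℝ) (x : ℝ) : ℝ :=
  ∑' j : ℤ, (Real.sqrt (2 * Real.pi * σ2))⁻¹ * Real.exp (-(x + v * (j : ℝ)) ^ 2 / (2 * σ2))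

/-- The differential entropy (in bits) of the `vℤ`-aliased Gaussian noise. -/
noncomputable def aliasedEntropy (v σ2 : ℝ) : ℝ :=
  -∫ x in (-v / 2)..(v / 2), aliasedGaussian v σ2 x * Real.logb 2 (aliasedGaussian v σ2 x)

open MeasureTheory ProbabilityTheory Set
open scoped NNReal

lemma summable_exp_neg_mul_int_sq {a : ℝ} (ha : 0 < a) :
    Summable fun n : ℤ => exp (-a * n ^ 2) := by
  have hnat : Summable fun n : ℕ => exp (-a * (n : ℝ) ^ 2) :=
    summable_exp_nat_mul_of_ge (neg_lt_zero.2 ha) fun n => by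
      exact_mod_cast Nat.le_self_pow two_ne_zero n
  exact .of_nat_of_neg (by simpa using hnat) (by simpa using hnat)

lemma logb_one_add_le_mul_logb_exp {b ε : ℝ} (hb : 1 < b) (hε : -1 < ε) :
    logb b (1 + ε) ≤ ε * logb b (exp 1) := by
  rw [logb, logb, log_exp, ← mul_div_assoc, mul_one]
  gcongr
  · exact (log_pos hb).le
  · linarith [log_le_sub_one_of_pos (show 0 < 1 + ε by linarith)]

lemma abs_mul_int_le_two_mul_abs_add {v x : ℝ} (hx : |x| ≤ v / 2) (j : ℤ) :
    |v * j| ≤ 2 * |x + v * j| := by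
  rcases eq_or_ne j 0 with rfl | hj
  · simp
  have hv : |v| ≤ |v * j| := by
    rw [abs_mul]
    exact le_mul_of_one_le_right (abs_nonneg v) (by exact_mod_cast Int.one_le_abs hj)
  have hvx : |x| ≤ |v| / 2 := hx.trans (by gcongr; exact le_abs_self v)
  have htri := abs_sub (x + v * j) x
  rw [add_sub_cancel_left] at htri
  linarith

lemma integral_mul_logb_le_logb_of_le {f : ℝ → ℝ} {a b M β : ℝ} (hβ : 1 < β) (hab : a ≤ b)
    (hf : ContinuousOn f (Icc a b)) (hpos : ∀ x ∈ Icc a b, 0 < f x)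
    (hle : ∀ x ∈ Icc a b, f x ≤ M) (hint : ∫ x in a..b, f x = 1) :
    ∫ x in a..b, f x * logb β (f x) ≤ logb β M := by
  have hlog : ContinuousOn (fun x => logb β (f x)) (Icc a b) :=
    hf.log (fun x hx => (hpos x hx).ne') |>.div_const _
  calc ∫ x in a..b, f x * logb β (f x)
      ≤ ∫ x in a..b, f x * logb β M := by
        refine intervalIntegral.integral_mono_on hab ?_ ?_ fun x hx => ?_
        · exact (hf.mul hlog).intervalIntegrable_of_Icc hab
        · exact (hf.mul continuousOn_const).intervalIntegrable_of_Icc hab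
        · exact mul_le_mul_of_nonneg_left (logb_le_logb_of_le hβ (hpos x hx) (hle x hx))
            (hpos x hx).le
    _ = logb β M := by rw [intervalIntegral.integral_mul_const, hint, one_mul]

section Periodization

variable {g : ℝ → ℝ} {v : ℝ}

lemma MeasureTheory.Integrable.hasSum_intervalIntegral_comp_add_mul_int (hg : Integrable g)
    (hv : 0 < v) (a : ℝ) :
    HasSum (fun j : ℤ => ∫ x in a..a + v, g (x + v * j)) (∫ x, g x) := by
  have hgv : Integrable fun t => v * g (v * t) :=
    ((integrable_comp_mul_left_iff g hv.ne').2 hg).const_mul v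
  have htotal : ∫ t, v * g (v * t) = ∫ x, g x := by
    rw [integral_const_mul, Measure.integral_comp_mul_left, abs_of_pos (inv_pos.2 hv),
      smul_eq_mul, mul_inv_cancel_left₀ hv.ne']
  have hterm (j : ℤ) :
      ∫ t in a / v + j..a / v + j + 1, v * g (v * t) = ∫ x in a..a + v, g (x + v * j) := by
    rw [intervalIntegral.integral_const_mul, intervalIntegral.integral_comp_mul_left _ hv.ne',
      smul_eq_mul, mul_inv_cancel_left₀ hv.ne', intervalIntegral.integral_comp_add_right]
    congr 1
    · field_simp
    · field_simp
      ring
  simpa only [hterm, htotal] using hgv.hasSum_intervalIntegral (a / v)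

lemma intervalIntegral_tsum_comp_add_mul_int {u : ℤ → ℝ} (hg : Continuous g)
    (hgi : Integrable g) (hv : 0 < v) (a : ℝ) (hu : Summable u)
    (hbound : ∀ (j : ℤ), ∀ x ∈ Icc a (a + v), ‖g (x + v * j)‖ ≤ u j) :
    ∫ x in a..a + v, ∑' j : ℤ, g (x + v * j) = ∫ x, g x := by
  have hIoc : ∀ x ∈ uIoc a (a + v), x ∈ Icc a (a + v) := fun x hx =>
    Ioc_subset_Icc_self (uIoc_of_le (le_add_of_nonneg_right hv.le) ▸ hx)
  refine (intervalIntegral.hasSum_integral_of_dominated_convergence (fun (j : ℤ) _ => u j)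
    (fun j => (hg.comp (continuous_add_const _)).aestronglyMeasurable)
    (fun j => ae_of_all _ fun x hx => hbound j x (hIoc x hx))
    (ae_of_all _ fun _ _ => hu) intervalIntegrable_const
    (ae_of_all _ fun x hx => (hu.of_norm_bounded fun j => hbound j x (hIoc x hx)).hasSum)).unique
    (hgi.hasSum_intervalIntegral_comp_add_mul_int hv a)

end Periodization

lemma gaussianPDFReal_le_of_abs_sub_le (μ : ℝ) (s : ℝ≥0) {x y : ℝ} (h : |x - μ| ≤ |y - μ|) :
    gaussianPDFReal μ s y ≤ gaussianPDFReal μ s x := by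
  simp only [gaussianPDFReal]
  gcongr _ * rexp (-?_ / _)
  exact sq_le_sq.2 h

lemma continuous_gaussianPDFReal (μ : ℝ) (s : ℝ≥0) : Continuous (gaussianPDFReal μ s) := by
  unfold gaussianPDFReal
  fun_prop

lemma summable_gaussianPDFReal_mul_int (s : ℝ≥0) {c : ℝ} (hc : c ≠ 0) :
    Summable fun j : ℤ => gaussianPDFReal 0 s (c * j) := by
  rcases eq_or_ne s 0 with rfl | hs
  · simp
  refine ((summable_exp_neg_mul_int_sq (a := c ^ 2 / (2 * s)) (by positivity)).mul_left
    (√(2 * π * s))⁻¹).congr fun j => ?_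
  simp only [gaussianPDFReal, sub_zero]
  ring_nf

lemma gaussianPDFReal_add_mul_int_le (s : ℝ≥0) {v x : ℝ} (hx : x ∈ Icc (-v / 2) (v / 2)) (j : ℤ) :
    gaussianPDFReal 0 s (x + v * j) ≤ gaussianPDFReal 0 s (v / 2 * j) := by
  refine gaussianPDFReal_le_of_abs_sub_le 0 s ?_
  have hx' : |x| ≤ v / 2 := abs_le.2 ⟨by linarith [hx.1], hx.2⟩
  rw [sub_zero, sub_zero, div_mul_eq_mul_div, abs_div, abs_two]
  linarith [abs_mul_int_le_two_mul_abs_add hx' j]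

lemma aliasedGaussian_eq_tsum_gaussianPDFReal {σ2 : ℝ} (hσ2 : 0 ≤ σ2) (v : ℝ) :
    aliasedGaussian v σ2 = fun x => ∑' j : ℤ, gaussianPDFReal 0 σ2.toNNReal (x + v * j) := by
  ext x
  simp [aliasedGaussian, gaussianPDFReal, Real.coe_toNNReal _ hσ2]

section AliasedGaussian

variable {σ2 v : ℝ}

lemma continuousOn_aliasedGaussian (hσ2 : 0 ≤ σ2) (hv : 0 < v) :
    ContinuousOn (aliasedGaussian v σ2) (Icc (-v / 2) (v / 2)) := by
  rw [aliasedGaussian_eq_tsum_gaussianPDFReal hσ2]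
  refine continuousOn_tsum (fun j => ?_)
    (summable_gaussianPDFReal_mul_int σ2.toNNReal (half_pos hv).ne') fun j x hx => ?_
  · exact ((continuous_gaussianPDFReal 0 _).comp (continuous_add_const _)).continuousOn
  · rw [Real.norm_of_nonneg (gaussianPDFReal_nonneg _ _ _)]
    exact gaussianPDFReal_add_mul_int_le _ hx j

lemma aliasedGaussian_pos (hσ2 : 0 < σ2) (hv : 0 < v) {x : ℝ} (hx : x ∈ Icc (-v / 2) (v / 2)) :
    0 < aliasedGaussian v σ2 x := by
  rw [aliasedGaussian_eq_tsum_gaussianPDFReal hσ2.le]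
  have hs : σ2.toNNReal ≠ 0 := by simpa using hσ2
  refine (summable_gaussianPDFReal_mul_int σ2.toNNReal (half_pos hv).ne').of_nonneg_of_le
    (fun j => gaussianPDFReal_nonneg _ _ _) (gaussianPDFReal_add_mul_int_le _ hx)
    |>.tsum_pos (fun j => gaussianPDFReal_nonneg _ _ _) 0 (gaussianPDFReal_pos _ _ _ hs)

lemma integral_aliasedGaussian (hσ2 : 0 < σ2) (hv : 0 < v) :
    ∫ x in -v / 2..v / 2, aliasedGaussian v σ2 x = 1 := by
  have hs : σ2.toNNReal ≠ 0 := by simpa using hσ2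
  have hend : -v / 2 + v = v / 2 := by ring
  rw [aliasedGaussian_eq_tsum_gaussianPDFReal hσ2.le, ← hend,
    intervalIntegral_tsum_comp_add_mul_int (continuous_gaussianPDFReal 0 _)
      (integrable_gaussianPDFReal 0 _) hv (-v / 2)
      (summable_gaussianPDFReal_mul_int σ2.toNNReal (half_pos hv).ne') fun j x hx => ?_,
    integral_gaussianPDFReal_eq_one 0 hs]
  rw [Real.norm_of_nonneg (gaussianPDFReal_nonneg _ _ _)]
  exact gaussianPDFReal_add_mul_int_le _ (hend ▸ hx) j

end AliasedGaussian

/-- if the `vℤ`-aliased Gaussian density is `ε`-flat, i.e.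
`f_{vℤ,σ²}(x) ≤ (1+ε)/v` on the fundamental interval, then the mod-vℤ channel
capacity is bounded as `C(vℤ,σ²) = log₂ v − h(vℤ,σ²) ≤ log₂(1+ε) ≤ ε log₂ e`. -/
theorem capacity_le_of_flatness (σ v ε : ℝ) (hσ : 0 < σ) (hv : 0 < v) (hε : 0 ≤ ε)
    (hflat : ∀ x ∈ Set.Icc (-v / 2) (v / 2),
      aliasedGaussian v (σ ^ 2) x ≤ (1 + ε) / v) :
    Real.logb 2 v - aliasedEntropy v (σ ^ 2) ≤ Real.logb 2 (1 + ε) ∧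
    Real.logb 2 (1 + ε) ≤ ε * Real.logb 2 (Real.exp 1) := by
  have hσ2 : 0 < σ ^ 2 := by positivity
  have hentropy := integral_mul_logb_le_logb_of_le one_lt_two (by linarith)
    (continuousOn_aliasedGaussian hσ2.le hv) (fun x hx => aliasedGaussian_pos hσ2 hv hx) hflat
    (integral_aliasedGaussian hσ2 hv)
  rw [logb_div (by linarith) hv.ne'] at hentropy
  refine ⟨?_, logb_one_add_le_mul_logb_exp one_lt_two (by linarith)⟩
  rw [aliasedEntropy]
  linarith
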